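/- arXiv:2402.07509 — 3 statements merged into one kernel-verified Lean document; each statement's English description precedes it below -/
import Mathlib

section
/- Let N be a norm on ℝ^d, u with N(u)=1, H a linear hyperplane with N(u+w) ≥ 1 for all w ∈ H, and K_η(u) = {v ∈ H : N(u+v) ≤ 1+η}, with |K_η(u)| its (d-1)-dimensional Lebesgue measure. Then the map η ↦ |K_η(u)|^{1/(d-1)} is concave on (0, ∞). -/
/-!
The sets `K η` are compact, contain `0` for `η > 0`, and by the triangle inequality
`a • K η + b • K η' ⊆ K (a η + b η')` whenever `a + b = 1`. The Brunn–Minkowski inequality in the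
`(d-1)`-dimensional parameter space of `H`, together with the homogeneity
`|r • K|^{1/(d-1)} = r |K|^{1/(d-1)}`, turns this inclusion into concavity of `η ↦ |K η|^{1/(d-1)}`.

Brunn–Minkowski follows from the Prékopa–Leindler inequality applied to indicator functions, after
rescaling both sets to unit volume. Prékopa–Leindler is proved by induction on the dimension with
Fubini. In dimension one, when `f` and `g` have the same supremum, the superlevel sets
`{f > t}` and `{g > t}` are empty or nonempty together and satisfy the one-dimensional
Brunn–Minkowski inequality; the layer-cake formula integrates this over `t`, and rescaling and
truncation remove the assumption on the suprema.
-/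

open MeasureTheory Set ENNReal
open scoped Pointwise NNReal

namespace Real

theorem volume_add_le_volume_add_of_isCompact {K L : Set ℝ} (hK : IsCompact K)
    (hL : IsCompact L) (hK₀ : K.Nonempty) (hL₀ : L.Nonempty) :
    volume K + volume L ≤ volume (K + L) := by
  set a := sSup K
  set b := sInf L
  have ha : a ∈ K := hK.sSup_mem hK₀
  have hb : b ∈ L := hL.sInf_mem hL₀
  -- `K + {b}` lies to the left of `a + b` and `{a} + L` to its right
  have hinter : (K + {b}) ∩ ({a} + L) ⊆ {a + b} := by
    rintro _ ⟨⟨x, hx, _, rfl, rfl⟩, ⟨_, rfl, y, hy, hxy⟩⟩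
    have := le_csSup hK.bddAbove hx
    have := csInf_le hL.bddBelow hy
    rw [mem_singleton_iff]
    linarith
  calc volume K + volume L = volume (K + {b}) + volume ({a} + L) := by
        rw [add_singleton, singleton_add, image_add_right, image_add_left,
          measure_preimage_add_right, measure_preimage_add]
    _ = volume ((K + {b}) ∪ ({a} + L)) := by
        rw [← measure_union_add_inter _ (isCompact_singleton.add hL).measurableSet,
          measure_mono_null hinter (measure_singleton _), add_zero]
    _ ≤ volume (K + L) := measure_mono <| union_subset
        (add_subset_add_left (singleton_subset_iff.2 hb))
        (add_subset_add_right (singleton_subset_iff.2 ha))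

theorem volume_add_le_of_add_subset {S T W : Set ℝ} (hS : MeasurableSet S)
    (hT : MeasurableSet T) (hS₀ : S.Nonempty) (hT₀ : T.Nonempty) (hW : S + T ⊆ W) :
    volume S + volume T ≤ volume W := by
  obtain ⟨s, hs⟩ := hS₀
  obtain ⟨t, ht⟩ := hT₀
  rw [hS.measure_eq_iSup_isCompact, hT.measure_eq_iSup_isCompact]
  simp only [iSup_and']
  refine ENNReal.biSup_add_biSup_le' ⟨∅, empty_subset _, isCompact_empty⟩
    ⟨∅, empty_subset _, isCompact_empty⟩ fun K ⟨hKS, hK⟩ L ⟨hLT, hL⟩ => ?_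
  -- adding a point of `S` (resp. `T`) makes the compact sets nonempty
  calc volume K + volume L ≤ volume (insert s K) + volume (insert t L) := by
        gcongr <;> exact subset_insert _ _
    _ ≤ volume (insert s K + insert t L) :=
        volume_add_le_volume_add_of_isCompact (hK.insert s) (hL.insert t)
          (insert_nonempty _ _) (insert_nonempty _ _)
    _ ≤ volume W := measure_mono <| (add_subset_add (insert_subset hs hKS)
          (insert_subset ht hLT)).trans hW

end Real

theorem volume_Ioi_inter_setOf_ofReal_lt (a : ℝ≥0∞) :
    volume (Ioi 0 ∩ {t : ℝ | ENNReal.ofReal t < a}) = a := by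
  rcases eq_or_ne a ∞ with rfl | ha
  · simp
  · have : Ioi 0 ∩ {t : ℝ | ENNReal.ofReal t < a} = Ioo 0 a.toReal := by
      ext t
      simp only [mem_inter_iff, mem_Ioi, mem_Ioo, and_congr_right_iff]
      exact fun ht => ENNReal.ofReal_lt_iff_lt_toReal ht.le ha
    rw [this, Real.volume_Ioo, sub_zero, ENNReal.ofReal_toReal ha]

theorem lintegral_eq_lintegral_meas_ofReal_lt {α : Type*} [MeasurableSpace α] (μ : Measure α)
    [SFinite μ] {f : α → ℝ≥0∞} (hf : Measurable f) :
    ∫⁻ x, f x ∂μ = ∫⁻ t in Ioi 0, μ {x | ENNReal.ofReal t < f x} := by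
  set S := {p : α × ℝ | ENNReal.ofReal p.2 < f p.1}
  have hS : MeasurableSet S :=
    measurableSet_lt (ENNReal.measurable_ofReal.comp measurable_snd) (hf.comp measurable_fst)
  calc ∫⁻ x, f x ∂μ = ∫⁻ x, (∫⁻ t in Ioi (0 : ℝ), S.indicator 1 (x, t)) ∂μ := by
        refine lintegral_congr fun x => ?_
        rw [← volume_Ioi_inter_setOf_ofReal_lt (f x), inter_comm,
          ← Measure.restrict_apply' measurableSet_Ioi,
          ← lintegral_indicator_one (measurableSet_lt ENNReal.measurable_ofReal measurable_const)]
        rfl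
    _ = ∫⁻ t in Ioi 0, ∫⁻ x, S.indicator 1 (x, t) ∂μ :=
        lintegral_lintegral_swap (measurable_const.indicator hS).aemeasurable
    _ = ∫⁻ t in Ioi 0, μ {x | ENNReal.ofReal t < f x} := by
        refine lintegral_congr fun t => ?_
        rw [← lintegral_indicator_one (measurableSet_lt measurable_const hf)]
        rfl

theorem ENNReal.geom_mean_le_arith_mean2_weighted {s : ℝ} (hs₀ : 0 < s) (hs₁ : s < 1) (p q : ℝ≥0∞) :
    p ^ (1 - s) * q ^ s ≤ ENNReal.ofReal (1 - s) * p + ENNReal.ofReal s * q := by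
  by_cases! h : p = ∞ ∨ q = ∞
  · rcases h with rfl | rfl <;> simp [hs₀, hs₁]
  lift p to ℝ≥0 using h.1
  lift q to ℝ≥0 using h.2
  have := NNReal.geom_mean_le_arith_mean2_weighted (1 - s).toNNReal s.toNNReal p q
    (by rw [← Real.toNNReal_add (by linarith) hs₀.le, sub_add_cancel, Real.toNNReal_one])
  rw [Real.coe_toNNReal _ (by linarith), Real.coe_toNNReal _ hs₀.le] at this
  rw [← coe_rpow_of_nonneg _ (by linarith), ← coe_rpow_of_nonneg _ hs₀.le, ENNReal.ofReal,
    ENNReal.ofReal]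
  exact_mod_cast this

section PrekopaLeindler

variable {s : ℝ}

theorem volume_superlevelSet_convexComb_le (hs₀ : 0 < s) (hs₁ : s < 1) {f g h : ℝ → ℝ≥0∞}
    (hf : Measurable f) (hg : Measurable g) (hfg : ⨆ x, f x = ⨆ y, g y)
    (H : ∀ x y, f x ^ (1 - s) * g y ^ s ≤ h ((1 - s) * x + s * y)) (t : ℝ) :
    ENNReal.ofReal (1 - s) * volume {x | ENNReal.ofReal t < f x}
      + ENNReal.ofReal s * volume {y | ENNReal.ofReal t < g y}
      ≤ volume {z | ENNReal.ofReal t < h z} := by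
  by_cases hM : ENNReal.ofReal t < ⨆ x, f x
  swap
  · -- above the common supremum both superlevel sets are empty
    have hf₀ : {x | ENNReal.ofReal t < f x} = ∅ :=
      eq_empty_of_forall_notMem fun x hx => hM (hx.trans_le (le_iSup f x))
    have hg₀ : {y | ENNReal.ofReal t < g y} = ∅ :=
      eq_empty_of_forall_notMem fun y hy => hM (hfg ▸ hy.trans_le (le_iSup g y))
    simp [hf₀, hg₀]
  have hf₀ : {x | ENNReal.ofReal t < f x}.Nonempty := lt_iSup_iff.1 hM
  have hg₀ : {y | ENNReal.ofReal t < g y}.Nonempty := lt_iSup_iff.1 (hfg ▸ hM :)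
  have hvol : ∀ {r : ℝ} (S : Set ℝ), 0 ≤ r → volume (r • S) = ENNReal.ofReal r * volume S := by
    intro r S hr
    rw [Measure.addHaar_smul_of_nonneg _ hr, Module.finrank_self, pow_one]
  rw [← hvol _ (by linarith), ← hvol _ hs₀.le]
  refine Real.volume_add_le_of_add_subset
    ((measurableSet_lt measurable_const hf).const_smul₀ _)
    ((measurableSet_lt measurable_const hg).const_smul₀ _) hf₀.smul_set hg₀.smul_set ?_
  rintro _ ⟨_, ⟨x, hx, rfl⟩, _, ⟨y, hy, rfl⟩, rfl⟩
  calc ENNReal.ofReal t = ENNReal.ofReal t ^ (1 - s) * ENNReal.ofReal t ^ s := by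
        rw [← rpow_add_of_nonneg _ _ (by linarith) hs₀.le, sub_add_cancel, ENNReal.rpow_one]
    _ < f x ^ (1 - s) * g y ^ s :=
        ENNReal.mul_lt_mul (rpow_lt_rpow hx (by linarith)) (rpow_lt_rpow hy hs₀)
    _ ≤ h ((1 - s) * x + s * y) := H x y

theorem lintegral_convexComb_le_of_iSup_eq (hs₀ : 0 < s) (hs₁ : s < 1) {f g h : ℝ → ℝ≥0∞}
    (hf : Measurable f) (hg : Measurable g) (hh : Measurable h) (hfg : ⨆ x, f x = ⨆ y, g y)
    (H : ∀ x y, f x ^ (1 - s) * g y ^ s ≤ h ((1 - s) * x + s * y)) :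
    ENNReal.ofReal (1 - s) * (∫⁻ x, f x) + ENNReal.ofReal s * (∫⁻ y, g y) ≤ ∫⁻ z, h z := by
  rw [lintegral_eq_lintegral_meas_ofReal_lt volume hf,
    lintegral_eq_lintegral_meas_ofReal_lt volume hg,
    lintegral_eq_lintegral_meas_ofReal_lt volume hh, ← lintegral_const_mul' _ _ ofReal_ne_top,
    ← lintegral_const_mul' _ _ ofReal_ne_top]
  exact (le_lintegral_add _ _).trans <| setLIntegral_mono' measurableSet_Ioi fun t _ =>
    volume_superlevelSet_convexComb_le hs₀ hs₁ hf hg hfg H t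

theorem prekopa_leindler_one_dim_of_iSup_ne_top (hs₀ : 0 < s) (hs₁ : s < 1)
    {f g h : ℝ → ℝ≥0∞} (hf : Measurable f) (hg : Measurable g) (hh : Measurable h)
    (hf_top : ⨆ x, f x ≠ ∞) (hg_top : ⨆ y, g y ≠ ∞)
    (H : ∀ x y, f x ^ (1 - s) * g y ^ s ≤ h ((1 - s) * x + s * y)) :
    (∫⁻ x, f x) ^ (1 - s) * (∫⁻ y, g y) ^ s ≤ ∫⁻ z, h z := by
  set a := ⨆ x, f x
  set b := ⨆ y, g y
  rcases eq_or_ne a 0 with ha₀ | ha₀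
  · have : ∀ x, f x = 0 := fun x => le_zero_iff.1 (ha₀ ▸ le_iSup f x)
    simp [this, zero_rpow_of_pos (sub_pos.2 hs₁)]
  rcases eq_or_ne b 0 with hb₀ | hb₀
  · have : ∀ y, g y = 0 := fun y => le_zero_iff.1 (hb₀ ▸ le_iSup g y)
    simp [this, zero_rpow_of_pos hs₀]
  set c := a ^ (1 - s) * b ^ s
  have hc₀ : c ≠ 0 := mul_ne_zero (rpow_pos (pos_iff_ne_zero.2 ha₀) hf_top).ne'
    (rpow_pos (pos_iff_ne_zero.2 hb₀) hg_top).ne'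
  have hc_top : c ≠ ∞ := mul_ne_top (rpow_ne_top_of_nonneg (sub_pos.2 hs₁).le hf_top)
    (rpow_ne_top_of_nonneg hs₀.le hg_top)
  -- normalizing `f` and `g` to have supremum `1` rescales the geometric mean by `c⁻¹`
  have hscale : ∀ u v : ℝ≥0∞,
      (a⁻¹ * u) ^ (1 - s) * (b⁻¹ * v) ^ s = c⁻¹ * (u ^ (1 - s) * v ^ s) := by
    intro u v
    rw [mul_rpow_of_nonneg _ _ (sub_pos.2 hs₁).le, mul_rpow_of_nonneg _ _ hs₀.le, inv_rpow,
      inv_rpow,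
      ENNReal.mul_inv (.inl (rpow_pos (pos_iff_ne_zero.2 ha₀) hf_top).ne')
        (.inl (rpow_ne_top_of_nonneg (sub_pos.2 hs₁).le hf_top)), mul_mul_mul_comm]
  have hsup : (⨆ x, a⁻¹ * f x) = ⨆ y, b⁻¹ * g y := by
    rw [← ENNReal.mul_iSup, ← ENNReal.mul_iSup, ENNReal.inv_mul_cancel ha₀ hf_top,
      ENNReal.inv_mul_cancel hb₀ hg_top]
  have key := lintegral_convexComb_le_of_iSup_eq hs₀ hs₁ (hf.const_mul _) (hg.const_mul _)
    (hh.const_mul c⁻¹) hsup fun x y => (hscale _ _).trans_le (mul_le_mul_right (H x y) _)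
  rw [lintegral_const_mul' _ _ (inv_ne_top.2 ha₀), lintegral_const_mul' _ _ (inv_ne_top.2 hb₀),
    lintegral_const_mul' _ _ (inv_ne_top.2 hc₀)] at key
  rw [← ENNReal.mul_le_mul_iff_right (ENNReal.inv_ne_zero.2 hc_top) (inv_ne_top.2 hc₀), ← hscale]
  exact (ENNReal.geom_mean_le_arith_mean2_weighted hs₀ hs₁ _ _).trans key

theorem prekopa_leindler_one_dim (hs₀ : 0 < s) (hs₁ : s < 1)
    {f g h : ℝ → ℝ≥0∞} (hf : Measurable f) (hg : Measurable g) (hh : Measurable h)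
    (H : ∀ x y, f x ^ (1 - s) * g y ^ s ≤ h ((1 - s) * x + s * y)) :
    (∫⁻ x, f x) ^ (1 - s) * (∫⁻ y, g y) ^ s ≤ ∫⁻ z, h z := by
  have htrunc : ∀ {F : ℝ → ℝ≥0∞}, Measurable F → ∫⁻ x, F x = ⨆ n : ℕ, ∫⁻ x, F x ⊓ n := by
    intro F hF
    rw [← lintegral_iSup (f := fun n x => F x ⊓ n) (fun n => hF.min measurable_const)
      fun m n hmn x => inf_le_inf_left _ (Nat.cast_le.2 hmn)]
    simp_rw [← inf_iSup_eq, iSup_natCast, inf_top_eq]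
  have hpow : ∀ {r : ℝ} (hr : 0 < r) (u : ℕ → ℝ≥0∞), (⨆ n, u n) ^ r = ⨆ n, u n ^ r :=
    fun hr u => (ENNReal.orderIsoRpow _ hr).map_iSup u
  rw [htrunc hf, htrunc hg, hpow (sub_pos.2 hs₁), hpow hs₀, ENNReal.iSup_mul]
  refine iSup_le fun m => ?_
  rw [ENNReal.mul_iSup]
  refine iSup_le fun n => ?_
  calc (∫⁻ x, f x ⊓ m) ^ (1 - s) * (∫⁻ y, g y ⊓ n) ^ s
      ≤ (∫⁻ x, f x ⊓ (max m n : ℕ)) ^ (1 - s) * (∫⁻ y, g y ⊓ (max m n : ℕ)) ^ s := by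
        gcongr <;> simp
    _ ≤ ∫⁻ z, h z := by
        refine prekopa_leindler_one_dim_of_iSup_ne_top hs₀ hs₁ (hf.min measurable_const)
          (hg.min measurable_const) hh ?_ ?_ fun x y => ?_
        · exact ne_top_of_le_ne_top (natCast_ne_top _) (iSup_le fun x => inf_le_right)
        · exact ne_top_of_le_ne_top (natCast_ne_top _) (iSup_le fun x => inf_le_right)
        · exact le_trans (by gcongr <;> exact inf_le_left) (H x y)

theorem prekopa_leindler (hs₀ : 0 < s) (hs₁ : s < 1) {n : ℕ}
    {f g h : (Fin n → ℝ) → ℝ≥0∞} (hf : Measurable f) (hg : Measurable g) (hh : Measurable h)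
    (H : ∀ x y, f x ^ (1 - s) * g y ^ s ≤ h ((1 - s) • x + s • y)) :
    (∫⁻ x, f x) ^ (1 - s) * (∫⁻ y, g y) ^ s ≤ ∫⁻ z, h z := by
  induction n with
  | zero =>
    have hvol : (volume : Measure (Fin 0 → ℝ)) univ = 1 := by simp [volume_pi]
    simp only [lintegral_unique, hvol, mul_one]
    convert H default default
  | succ n ih =>
    -- Fubini along the first coordinate: the sections satisfy the `n`-dimensional hypothesis,
    -- so by induction their integrals satisfy the one-dimensional one
    set e := MeasurableEquiv.piFinSuccAbove (fun _ : Fin (n + 1) => ℝ) 0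
    have he := volume_preserving_piFinSuccAbove (fun _ : Fin (n + 1) => ℝ) 0
    have hint : ∀ {F : (Fin (n + 1) → ℝ) → ℝ≥0∞}, Measurable F →
        ∫⁻ z, F z = ∫⁻ t, ∫⁻ x, F (e.symm (t, x)) := by
      intro F hF
      rw [← he.symm.lintegral_comp hF, Measure.volume_eq_prod]
      exact lintegral_prod (F ∘ e.symm) (hF.comp e.symm.measurable).aemeasurable
    have hcomb : ∀ t₁ t₂ (x y : Fin n → ℝ), (1 - s) • e.symm (t₁, x) + s • e.symm (t₂, y)
        = e.symm ((1 - s) * t₁ + s * t₂, (1 - s) • x + s • y) := fun _ _ _ _ => e.injective rfl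
    rw [hint hf, hint hg, hint hh]
    refine prekopa_leindler_one_dim hs₀ hs₁ (hf.comp e.symm.measurable).lintegral_prod_right'
      (hg.comp e.symm.measurable).lintegral_prod_right'
      (hh.comp e.symm.measurable).lintegral_prod_right' fun t₁ t₂ => ?_
    refine ih ((hf.comp e.symm.measurable).comp measurable_prodMk_left)
      ((hg.comp e.symm.measurable).comp measurable_prodMk_left)
      ((hh.comp e.symm.measurable).comp measurable_prodMk_left) fun x y => ?_
    simpa only [Function.comp, hcomb] using H (e.symm (t₁, x)) (e.symm (t₂, y))

end PrekopaLeindler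

theorem measure_le_measure_add_of_mem {G : Type*} [AddGroup G] [MeasurableSpace G]
    [MeasurableAdd G] (μ : Measure G) [μ.IsAddLeftInvariant] {A : Set G} {a : G} (ha : a ∈ A)
    (B : Set G) : μ B ≤ μ (A + B) :=
  (measure_vadd μ a B).symm.le.trans (measure_mono (vadd_set_subset_add ha))

theorem volume_rpow_mul_volume_rpow_le {s : ℝ} (hs₀ : 0 < s) (hs₁ : s < 1) {n : ℕ}
    {A B C : Set (Fin n → ℝ)} (hA : MeasurableSet A) (hB : MeasurableSet B) (hC : MeasurableSet C)
    (hABC : (1 - s) • A + s • B ⊆ C) : volume A ^ (1 - s) * volume B ^ s ≤ volume C := by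
  simpa only [lintegral_indicator_one hA, lintegral_indicator_one hB, lintegral_indicator_one hC]
    using prekopa_leindler (f := A.indicator 1) (g := B.indicator 1) (h := C.indicator 1) hs₀ hs₁
      (measurable_const.indicator hA) (measurable_const.indicator hB)
      (measurable_const.indicator hC) fun x y => by
        by_cases hx : x ∈ A
        · by_cases hy : y ∈ B
          · simp [hx, hy, hABC (add_mem_add (smul_mem_smul_set hx) (smul_mem_smul_set hy))]
          · simp [hy, zero_rpow_of_pos hs₀]
        · simp [hx, zero_rpow_of_pos (sub_pos.2 hs₁)]

section AddHaar

variable {E : Type*} [NormedAddCommGroup E] [NormedSpace ℝ E] [MeasurableSpace E] [BorelSpace E]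
  [FiniteDimensional ℝ E] (μ : Measure E) [μ.IsAddHaarMeasure] {n : ℕ}

theorem toReal_addHaar_smul_rpow (hE : Module.finrank ℝ E = n) (hn : n ≠ 0) {r : ℝ} (hr : 0 ≤ r)
    (S : Set E) : (μ (r • S)).toReal ^ (n⁻¹ : ℝ) = r * (μ S).toReal ^ (n⁻¹ : ℝ) := by
  rw [Measure.addHaar_smul_of_nonneg μ hr, hE, toReal_mul, toReal_ofReal (by positivity),
    Real.mul_rpow (by positivity) toReal_nonneg, Real.pow_rpow_inv_natCast hr hn]

theorem addHaar_inv_toReal_rpow_smul (hE : Module.finrank ℝ E = n) (hn : n ≠ 0) {S : Set E}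
    (hS : 0 < (μ S).toReal ^ (n⁻¹ : ℝ)) : μ (((μ S).toReal ^ (n⁻¹ : ℝ))⁻¹ • S) = 1 := by
  have h := toReal_addHaar_smul_rpow μ hE hn (inv_nonneg.2 hS.le) S
  rw [inv_mul_cancel₀ hS.ne'] at h
  rw [← toReal_eq_one_iff, ← Real.rpow_inv_natCast_pow toReal_nonneg hn, h, one_pow]

end AddHaar

theorem brunn_minkowski_pi {n : ℕ} (hn : n ≠ 0) {A B : Set (Fin n → ℝ)} (hA : IsCompact A)
    (hB : IsCompact B) (hA₀ : A.Nonempty) (hB₀ : B.Nonempty) :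
    (volume A).toReal ^ (n⁻¹ : ℝ) + (volume B).toReal ^ (n⁻¹ : ℝ) ≤
      (volume (A + B)).toReal ^ (n⁻¹ : ℝ) := by
  have hfin : Module.finrank ℝ (Fin n → ℝ) = n := Module.finrank_fin_fun ℝ
  have hmono : ∀ {S : Set (Fin n → ℝ)}, volume S ≤ volume (A + B) →
      (volume S).toReal ^ (n⁻¹ : ℝ) ≤ (volume (A + B)).toReal ^ (n⁻¹ : ℝ) := fun h =>
    Real.rpow_le_rpow toReal_nonneg (toReal_mono (hA.add hB).measure_lt_top.ne h) (by positivity)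
  rcases (Real.rpow_nonneg toReal_nonneg _ : 0 ≤ (volume A).toReal ^ (n⁻¹ : ℝ)).eq_or_lt
    with hα | hα
  · rw [← hα, zero_add]
    exact hmono (measure_le_measure_add_of_mem volume hA₀.some_mem B)
  rcases (Real.rpow_nonneg toReal_nonneg _ : 0 ≤ (volume B).toReal ^ (n⁻¹ : ℝ)).eq_or_lt
    with hβ | hβ
  · rw [← hβ, add_zero]
    exact hmono ((measure_le_measure_add_of_mem volume hB₀.some_mem A).trans_eq
      (by rw [add_comm]))
  set α := (volume A).toReal ^ (n⁻¹ : ℝ)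
  set β := (volume B).toReal ^ (n⁻¹ : ℝ)
  -- the multiplicative form for the unit-volume sets `α⁻¹ • A`, `β⁻¹ • B` and `λ = β / (α + β)`
  have hcomb : (1 - β / (α + β)) • (α⁻¹ • A) + (β / (α + β)) • (β⁻¹ • B) =
      (α + β)⁻¹ • (A + B) := by
    rw [smul_smul, smul_smul, smul_add]
    congr 2
    · field_simp
      ring
    · field_simp
  have key := volume_rpow_mul_volume_rpow_le (div_pos hβ (add_pos hα hβ))
    ((div_lt_one (add_pos hα hβ)).2 (lt_add_of_pos_left β hα))
    ((hA.smul _).measurableSet) ((hB.smul _).measurableSet)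
    (((hA.add hB).smul _).measurableSet) hcomb.subset
  rw [addHaar_inv_toReal_rpow_smul volume hfin hn hα,
    addHaar_inv_toReal_rpow_smul volume hfin hn hβ, one_rpow, one_rpow, one_mul] at key
  have h1 : 1 ≤ (volume ((α + β)⁻¹ • (A + B))).toReal ^ (n⁻¹ : ℝ) :=
    Real.one_le_rpow (toReal_one ▸ toReal_mono ((hA.add hB).smul _).measure_lt_top.ne key)
      (by positivity)
  rwa [toReal_addHaar_smul_rpow volume hfin hn (by positivity), ← div_eq_inv_mul,
    one_le_div (add_pos hα hβ)] at h1

theorem EuclideanSpace.brunn_minkowski {n : ℕ} (hn : n ≠ 0) {A B : Set (EuclideanSpace ℝ (Fin n))}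
    (hA : IsCompact A) (hB : IsCompact B) (hA₀ : A.Nonempty) (hB₀ : B.Nonempty) :
    (volume A).toReal ^ (n⁻¹ : ℝ) + (volume B).toReal ^ (n⁻¹ : ℝ) ≤
      (volume (A + B)).toReal ^ (n⁻¹ : ℝ) := by
  let e := EuclideanSpace.equiv (Fin n) ℝ
  have hvol : ∀ {S}, IsCompact S → volume (e '' S) = volume S := fun hS => by
    rw [e.image_eq_preimage_symm]
    exact (PiLp.volume_preserving_toLp (Fin n)).measure_preimage hS.measurableSet.nullMeasurableSet
  simpa only [← image_add e, hvol hA, hvol hB, hvol (hA.add hB)] using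
    brunn_minkowski_pi hn (hA.image e.continuous) (hB.image e.continuous) (hA₀.image e)
      (hB₀.image e)

theorem concaveOn_toReal_volume_rpow {n : ℕ} (hn : n ≠ 0) {I : Set ℝ} (hI : Convex ℝ I)
    {K : ℝ → Set (EuclideanSpace ℝ (Fin n))} (hK : ∀ η ∈ I, IsCompact (K η))
    (hK₀ : ∀ η ∈ I, (K η).Nonempty)
    (hKadd : ∀ η ∈ I, ∀ η' ∈ I, ∀ a b : ℝ, 0 ≤ a → 0 ≤ b → a + b = 1 →
      a • K η + b • K η' ⊆ K (a * η + b * η')) :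
    ConcaveOn ℝ I fun η => (volume (K η)).toReal ^ (n⁻¹ : ℝ) := by
  have hfin : Module.finrank ℝ (EuclideanSpace ℝ (Fin n)) = n := finrank_euclideanSpace_fin
  refine ⟨hI, fun η hη η' hη' a b ha hb hab => ?_⟩
  have hη'' : a * η + b * η' ∈ I := hI hη hη' ha hb hab
  calc a • (volume (K η)).toReal ^ (n⁻¹ : ℝ) + b • (volume (K η')).toReal ^ (n⁻¹ : ℝ)
      = (volume (a • K η)).toReal ^ (n⁻¹ : ℝ) + (volume (b • K η')).toReal ^ (n⁻¹ : ℝ) := by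
        rw [toReal_addHaar_smul_rpow volume hfin hn ha, toReal_addHaar_smul_rpow volume hfin hn hb,
          smul_eq_mul, smul_eq_mul]
    _ ≤ (volume (a • K η + b • K η')).toReal ^ (n⁻¹ : ℝ) :=
        EuclideanSpace.brunn_minkowski hn ((hK η hη).smul a) ((hK η' hη').smul b)
          (hK₀ η hη).smul_set (hK₀ η' hη').smul_set
    _ ≤ (volume (K (a • η + b • η'))).toReal ^ (n⁻¹ : ℝ) :=
        Real.rpow_le_rpow toReal_nonneg (toReal_mono (hK _ hη'').measure_lt_top.ne
          (measure_mono (hKadd η hη η' hη' a b ha hb hab))) (by positivity)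

theorem ConvexOn.smul_setOf_le_add_smul_setOf_le_subset {E : Type*} [AddCommGroup E]
    [Module ℝ E] {F : E → ℝ} (hF : ConvexOn ℝ univ F) {a b : ℝ} (ha : 0 ≤ a) (hb : 0 ≤ b)
    (hab : a + b = 1) (η η' : ℝ) :
    a • {x | F x ≤ η} + b • {x | F x ≤ η'} ⊆ {x | F x ≤ a * η + b * η'} := by
  rintro _ ⟨_, ⟨x, hx, rfl⟩, _, ⟨y, hy, rfl⟩, rfl⟩
  exact (hF.2 trivial trivial ha hb hab).trans
    (add_le_add (mul_le_mul_of_nonneg_left hx ha) (mul_le_mul_of_nonneg_left hy hb))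

section NormLike

variable {E : Type*} [NormedAddCommGroup E] [NormedSpace ℝ E] {N : E → ℝ}

theorem convexOn_univ_of_add_le_of_smul (h_tri : ∀ x y, N (x + y) ≤ N x + N y)
    (h_smul : ∀ (a : ℝ) x, N (a • x) = |a| * N x) : ConvexOn ℝ univ N :=
  ⟨convex_univ, fun x _ y _ a b ha hb _ => by
    simpa only [h_smul, abs_of_nonneg ha, abs_of_nonneg hb, smul_eq_mul] using
      h_tri (a • x) (b • y)⟩

theorem nonneg_of_add_le_of_smul (h_tri : ∀ x y, N (x + y) ≤ N x + N y)
    (h_smul : ∀ (a : ℝ) x, N (a • x) = |a| * N x) (x : E) : 0 ≤ N x := by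
  have h0 : N 0 = 0 := by simpa using h_smul 0 0
  have h := h_tri x ((-1 : ℝ) • x)
  rw [h_smul, neg_one_smul, add_neg_cancel, h0, abs_neg, abs_one, one_mul] at h
  linarith

theorem continuous_of_add_le_of_smul [FiniteDimensional ℝ E]
    (h_tri : ∀ x y, N (x + y) ≤ N x + N y) (h_smul : ∀ (a : ℝ) x, N (a • x) = |a| * N x) :
    Continuous N :=
  continuousOn_univ.1 ((convexOn_univ_of_add_le_of_smul h_tri h_smul).continuousOn isOpen_univ)

theorem exists_pos_mul_norm_le_of_add_le_of_smul [FiniteDimensional ℝ E]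
    (h_tri : ∀ x y, N (x + y) ≤ N x + N y) (h_smul : ∀ (a : ℝ) x, N (a • x) = |a| * N x)
    (h_def : ∀ x, N x = 0 → x = 0) : ∃ c > 0, ∀ x, c * ‖x‖ ≤ N x := by
  have hN₀ := nonneg_of_add_le_of_smul h_tri h_smul
  rcases subsingleton_or_nontrivial E with hE | hE
  · exact ⟨1, one_pos, fun x => by simp [Subsingleton.elim x 0, hN₀]⟩
  -- `N` attains a positive minimum on the unit sphere
  obtain ⟨x₀, hx₀, hmin⟩ := (isCompact_sphere (0 : E) 1).exists_isMinOn
    (NormedSpace.sphere_nonempty.2 zero_le_one)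
    (continuous_of_add_le_of_smul h_tri h_smul).continuousOn
  have hx₀' : x₀ ≠ 0 := ne_zero_of_mem_sphere one_ne_zero ⟨x₀, hx₀⟩
  refine ⟨N x₀, (hN₀ x₀).lt_of_ne' fun h => hx₀' (h_def _ h), fun x => ?_⟩
  rcases eq_or_ne x 0 with rfl | hx
  · simp [hN₀]
  have hxpos : 0 < ‖x‖ := norm_pos_iff.2 hx
  have h := hmin (show ‖x‖⁻¹ • x ∈ Metric.sphere (0 : E) 1 by
    simp [norm_smul, hxpos.ne'])
  rw [mem_ofPred_eq, h_smul, abs_of_pos (inv_pos.2 hxpos), inv_mul_eq_div, le_div_iff₀ hxpos] at h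
  exact h

theorem isCompact_setOf_add_linearIsometry_le [FiniteDimensional ℝ E] {F : Type*}
    [NormedAddCommGroup F] [NormedSpace ℝ F] [FiniteDimensional ℝ F]
    (h_tri : ∀ x y, N (x + y) ≤ N x + N y) (h_smul : ∀ (a : ℝ) x, N (a • x) = |a| * N x)
    (h_def : ∀ x, N x = 0 → x = 0) (u : E) (φ : F →ₗᵢ[ℝ] E) (r : ℝ) :
    IsCompact {v | N (u + φ v) ≤ r} := by
  obtain ⟨c, hc, hcN⟩ := exists_pos_mul_norm_le_of_add_le_of_smul h_tri h_smul h_def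
  refine Metric.isCompact_of_isClosed_isBounded
    (isClosed_le ((continuous_of_add_le_of_smul h_tri h_smul).comp
      (continuous_const.add φ.continuous)) continuous_const)
    (isBounded_iff_forall_norm_le.2 ⟨(r + N u) / c, fun v hv => ?_⟩)
  have h := h_tri (u + φ v) ((-1 : ℝ) • u)
  rw [h_smul, neg_one_smul, add_neg_cancel_comm, abs_neg, abs_one, one_mul] at h
  rw [le_div_iff₀ hc, mul_comm, ← φ.norm_map]
  linarith [hcN (φ v), show N (u + φ v) ≤ r from hv]

end NormLike

theorem stmt7_general (d : ℕ) (hd : 2 ≤ d)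
    (N : EuclideanSpace ℝ (Fin d) → ℝ)
    (h_tri : ∀ x y, N (x + y) ≤ N x + N y)
    (h_smul : ∀ (a : ℝ) x, N (a • x) = |a| * N x)
    (h_def : ∀ x, N x = 0 → x = 0)
    (u : EuclideanSpace ℝ (Fin d)) (hu : N u = 1)
    (φ : EuclideanSpace ℝ (Fin (d - 1)) →ₗᵢ[ℝ] EuclideanSpace ℝ (Fin d)) :
    ConcaveOn ℝ (Set.Ioi (0 : ℝ))
      (fun η => (volume {v : EuclideanSpace ℝ (Fin (d - 1)) | N (u + φ v) ≤ 1 + η}).toReal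
        ^ ((1 : ℝ) / ((d : ℝ) - 1))) := by
  have hF : ConvexOn ℝ univ fun v => N (u + φ v) :=
    (((convexOn_univ_of_add_le_of_smul h_tri h_smul).translate_right u).comp_linearMap
      φ.toLinearMap).subset (subset_univ _) convex_univ
  have hexp : (1 : ℝ) / ((d : ℝ) - 1) = ((d - 1 : ℕ) : ℝ)⁻¹ := by
    rw [one_div, Nat.cast_sub (by omega), Nat.cast_one]
  rw [hexp]
  refine concaveOn_toReal_volume_rpow (by omega) (convex_Ioi 0)
    (fun η _ => isCompact_setOf_add_linearIsometry_le h_tri h_smul h_def u φ (1 + η))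
    (fun η hη => ⟨0, by simpa [hu] using (mem_Ioi.1 hη).le⟩)
    (fun η _ η' _ a b ha hb hab => ?_)
  convert hF.smul_setOf_le_add_smul_setOf_le_subset ha hb hab (1 + η) (1 + η') using 4
  linear_combination -hab

/-- The map `η ↦ |K_η(u)|^{1/(d-1)}` is concave on `(0,∞)`, where `|·|` is the
`(d-1)`-dimensional Lebesgue measure on the hyperplane `H`, parametrized by a
linear isometry `φ` from `ℝ^{d-1}`. -/
theorem stmt7 (d : ℕ) (hd : 2 ≤ d)
    (N : EuclideanSpace ℝ (Fin d) → ℝ)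
    (h_tri : ∀ x y, N (x + y) ≤ N x + N y)
    (h_smul : ∀ (a : ℝ) x, N (a • x) = |a| * N x)
    (h_def : ∀ x, N x = 0 → x = 0)
    (u : EuclideanSpace ℝ (Fin d)) (hu : N u = 1)
    (φ : EuclideanSpace ℝ (Fin (d - 1)) →ₗᵢ[ℝ] EuclideanSpace ℝ (Fin d))
    (hsupp : ∀ v, 1 ≤ N (u + φ v)) :
    ConcaveOn ℝ (Set.Ioi (0 : ℝ))
      (fun η => (volume {v : EuclideanSpace ℝ (Fin (d - 1)) | N (u + φ v) ≤ 1 + η}).toReal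
        ^ ((1 : ℝ) / ((d : ℝ) - 1))) :=
  stmt7_general d hd N h_tri h_smul h_def u hu φ
end

section
/- Let N be a norm on ℝ^d, u with N(u)=1, H a linear hyperplane with N(u+w) ≥ 1 for all w ∈ H, and K_η(u) = {v ∈ H : N(u+v) ≤ 1+η}. Then the function r(η) = |K_η(u)| / η^{d-1} is non-increasing on (0, ∞), and consequently h(η) = η^{-d}|K_η(u)| is strictly decreasing where it is positive. -/
/-!
Convexity of `v ↦ N (u + φ v)`, which takes the value `1` at `0`, gives `t • K_η ⊆ K_{tη}` for
`t ∈ (0, 1]`. Haar measure scales by `t ^ (d - 1)` under `t •`, so with `t = η₁ / η₂` we get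
`(η₁ / η₂) ^ (d - 1) |K_{η₂}| ≤ |K_{η₁}|`, which is the monotonicity of `r`. Then
`h(η) = r(η) / η`, where positive, has a non-increasing positive numerator over a strictly
increasing denominator.
-/

open MeasureTheory Pointwise Set Module

theorem ConvexOn.smul_setOf_le_subset {E : Type*} [AddCommGroup E] [Module ℝ E] {g : E → ℝ}
    (hg : ConvexOn ℝ univ g) {c : ℝ} (hg0 : g 0 ≤ c) {t : ℝ} (ht0 : 0 ≤ t) (ht1 : t ≤ 1)
    (η : ℝ) : t • {v | g v ≤ c + η} ⊆ {v | g v ≤ c + t * η} := by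
  rintro _ ⟨v, hv : g v ≤ c + η, rfl⟩
  have hcomb := hg.2 (mem_univ v) (mem_univ 0) ht0 (sub_nonneg.2 ht1) (add_sub_cancel t 1)
  simp only [smul_zero, add_zero, smul_eq_mul] at hcomb
  show g (t • v) ≤ c + t * η
  nlinarith

theorem antitoneOn_measure_toReal_div_pow_finrank {F : Type*} [NormedAddCommGroup F]
    [NormedSpace ℝ F] [MeasurableSpace F] [BorelSpace F] [FiniteDimensional ℝ F]
    (μ : Measure F) [μ.IsAddHaarMeasure] {S : ℝ → Set F} (hS : Monotone S)
    (hscale : ∀ t η, 0 < t → t ≤ 1 → t • S η ⊆ S (t * η)) :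
    AntitoneOn (fun η => (μ (S η)).toReal / η ^ finrank ℝ F) (Ioi 0) := by
  intro a (ha : 0 < a) b (hb : 0 < b) hab
  set n := finrank ℝ F
  -- an infinite measure has `toReal = 0`
  by_cases hfin : μ (S b) = ⊤
  · simp only [hfin, ENNReal.toReal_top, zero_div]
    positivity
  have ht : 0 < a / b := div_pos ha hb
  have hsub : (a / b) • S b ⊆ S a := by
    simpa [div_mul_cancel₀ a hb.ne'] using hscale (a / b) b ht ((div_le_one hb).2 hab)
  have hmeas : ENNReal.ofReal ((a / b) ^ n) * μ (S b) ≤ μ (S a) := by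
    simpa [Measure.addHaar_smul, abs_of_pos ht] using measure_mono (μ := μ) hsub
  have hreal : (a / b) ^ n * (μ (S b)).toReal ≤ (μ (S a)).toReal := by
    simpa [ENNReal.toReal_mul, ENNReal.toReal_ofReal (pow_nonneg ht.le n)] using
      ENNReal.toReal_mono (measure_mono (hS hab) |>.trans_lt (Ne.lt_top hfin)).ne hmeas
  calc (μ (S b)).toReal / b ^ n = (a / b) ^ n * (μ (S b)).toReal / a ^ n := by
        rw [div_pow]; field_simp
    _ ≤ (μ (S a)).toReal / a ^ n := by gcongr

theorem AntitoneOn.div_id_lt {r : ℝ → ℝ} (hr : AntitoneOn r (Ioi 0)) {a b : ℝ} (ha : 0 < a)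
    (hab : a < b) (hpos : 0 < r a / a) : r b / b < r a / a := by
  have hb : 0 < b := ha.trans hab
  calc r b / b ≤ r a / b := by gcongr; exact hr ha hb hab.le
    _ < r a / a := div_lt_div_of_pos_left ((div_pos_iff_of_pos_right ha).1 hpos) ha hab

theorem stmt8_general (d : ℕ) (hd : 2 ≤ d)
    (N : EuclideanSpace ℝ (Fin d) → ℝ)
    (h_tri : ∀ x y, N (x + y) ≤ N x + N y)
    (h_smul : ∀ (a : ℝ) x, N (a • x) = |a| * N x)
    (u : EuclideanSpace ℝ (Fin d)) (hu : N u = 1)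
    (φ : EuclideanSpace ℝ (Fin (d - 1)) →ₗᵢ[ℝ] EuclideanSpace ℝ (Fin d)) :
    AntitoneOn
      (fun η => (volume {v : EuclideanSpace ℝ (Fin (d - 1)) | N (u + φ v) ≤ 1 + η}).toReal
        / η ^ (d - 1)) (Set.Ioi 0) ∧
    (∀ η₁ η₂ : ℝ, 0 < η₁ → η₁ < η₂ →
      0 < (volume {v : EuclideanSpace ℝ (Fin (d - 1)) | N (u + φ v) ≤ 1 + η₁}).toReal / η₁ ^ d →
      (volume {v : EuclideanSpace ℝ (Fin (d - 1)) | N (u + φ v) ≤ 1 + η₂}).toReal / η₂ ^ d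
        < (volume {v : EuclideanSpace ℝ (Fin (d - 1)) | N (u + φ v) ≤ 1 + η₁}).toReal / η₁ ^ d) := by
  have hconv : ConvexOn ℝ univ fun v => N (u + φ v) :=
    ((Seminorm.of N h_tri fun a x => by rw [h_smul, Real.norm_eq_abs]).convexOn.translate_right
      u).comp_linearMap φ.toLinearMap
  have hanti := antitoneOn_measure_toReal_div_pow_finrank volume
    (S := fun η => {v | N (u + φ v) ≤ 1 + η}) (fun _ _ hab => ofPred_subset_ofPred.2 fun _ hv => by linarith)
    fun t η ht0 ht1 => hconv.smul_setOf_le_subset (by simp [hu]) ht0.le ht1 η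
  rw [finrank_euclideanSpace_fin] at hanti
  have hpow : ∀ η : ℝ, η ^ d = η ^ (d - 1) * η := fun η => by
    rw [← pow_succ, Nat.sub_add_cancel (by omega)]
  refine ⟨hanti, fun η₁ η₂ h₁ h₁₂ hpos => ?_⟩
  simp only [hpow, ← div_div] at hpos ⊢
  exact hanti.div_id_lt h₁ h₁₂ hpos

/-- `r(η) = |K_η(u)|/η^{d-1}` is non-increasing on `(0,∞)`, and consequently
`h(η) = η^{-d}|K_η(u)|` is strictly decreasing where it is positive. -/
theorem stmt8 (d : ℕ) (hd : 2 ≤ d)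
    (N : EuclideanSpace ℝ (Fin d) → ℝ)
    (h_tri : ∀ x y, N (x + y) ≤ N x + N y)
    (h_smul : ∀ (a : ℝ) x, N (a • x) = |a| * N x)
    (h_def : ∀ x, N x = 0 → x = 0)
    (u : EuclideanSpace ℝ (Fin d)) (hu : N u = 1)
    (φ : EuclideanSpace ℝ (Fin (d - 1)) →ₗᵢ[ℝ] EuclideanSpace ℝ (Fin d))
    (hsupp : ∀ v, 1 ≤ N (u + φ v)) :
    AntitoneOn
      (fun η => (volume {v : EuclideanSpace ℝ (Fin (d - 1)) | N (u + φ v) ≤ 1 + η}).toReal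
        / η ^ (d - 1)) (Set.Ioi 0) ∧
    (∀ η₁ η₂ : ℝ, 0 < η₁ → η₁ < η₂ →
      0 < (volume {v : EuclideanSpace ℝ (Fin (d - 1)) | N (u + φ v) ≤ 1 + η₁}).toReal / η₁ ^ d →
      (volume {v : EuclideanSpace ℝ (Fin (d - 1)) | N (u + φ v) ≤ 1 + η₂}).toReal / η₂ ^ d
        < (volume {v : EuclideanSpace ℝ (Fin (d - 1)) | N (u + φ v) ≤ 1 + η₁}).toReal / η₁ ^ d) :=
  stmt8_general d hd N h_tri h_smul u hu φ
end

section
/- Let N be a norm on ℝ^d such that B_{‖·‖₂}(α) ⊆ B_N(1) ⊆ B_{‖·‖₂}(β) for some 0 < α ≤ β. Let u ∈ ℝ^d with N(u) = 1, H a linear hyperplane such that N(u+w) ≥ 1 for all w ∈ H, and let u* be the vector orthogonal (for the Euclidean inner product) to H with u·u* = 1. Then β^{-1} ≤ ‖u*‖₂ ≤ α^{-1}. -/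
/-! Every `x` with `⟪u*, x⟫ = t > 0` can be written as `t • (u + w)` with `w ∈ H = (ℝ ∙ u*)ᗮ`,
so the supporting property gives `t ≤ N x`: the unit ball of `N` lies in the half-space
`⟪u*, ·⟫ ≤ 1`. Testing this on the point `α • u* / ‖u*‖` of the inner Euclidean ball gives
`α ‖u*‖ ≤ 1`, while Cauchy–Schwarz and `‖u‖ ≤ β` give `1 = ⟪u, u*⟫ ≤ β ‖u*‖`. -/

open Module RealInnerProductSpace

theorem Submodule.eq_orthogonal_span_singleton_of_finrank_eq {𝕜 E : Type*} [RCLike 𝕜]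
    [NormedAddCommGroup E] [InnerProductSpace 𝕜 E] [FiniteDimensional 𝕜 E]
    {K : Submodule 𝕜 E} {v : E} (hv : v ≠ 0) (hK : ∀ w ∈ K, inner 𝕜 v w = 0)
    (hrank : finrank 𝕜 K = finrank 𝕜 E - 1) : K = (𝕜 ∙ v)ᗮ := by
  have hle : K ≤ (𝕜 ∙ v)ᗮ := fun w hw ↦ mem_orthogonal_singleton_iff_inner_right.mpr (hK w hw)
  have hcompl := finrank_add_finrank_orthogonal (𝕜 ∙ v)
  rw [finrank_span_singleton hv] at hcompl
  exact eq_of_le_of_finrank_eq hle (by omega)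

section

variable {E : Type*} [NormedAddCommGroup E] [InnerProductSpace ℝ E]

theorem inner_le_of_forall_one_le_add_orthogonal {N : E → ℝ}
    (hN : ∀ (a : ℝ) x, 0 < a → N (a • x) = a * N x) {u v : E} (huv : ⟪v, u⟫ = 1)
    (hsupp : ∀ w ∈ (ℝ ∙ v)ᗮ, 1 ≤ N (u + w)) {x : E} (hx : 0 < ⟪v, x⟫) : ⟪v, x⟫ ≤ N x := by
  set t := ⟪v, x⟫
  have hw : t⁻¹ • x - u ∈ (ℝ ∙ v)ᗮ := by
    rw [Submodule.mem_orthogonal_singleton_iff_inner_right, inner_sub_right,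
      real_inner_smul_right, huv, inv_mul_cancel₀ hx.ne', sub_self]
  have hx_eq : x = t • (u + (t⁻¹ • x - u)) := by
    rw [add_sub_cancel, smul_smul, mul_inv_cancel₀ hx.ne', one_smul]
  calc t ≤ t * N (u + (t⁻¹ • x - u)) := le_mul_of_one_le_right hx.le (hsupp _ hw)
    _ = N x := by rw [← hN _ _ hx, ← hx_eq]

theorem norm_le_inv_of_inner_le_one {v : E} {α : ℝ} (hα : 0 < α)
    (h : ∀ x, ‖x‖ ≤ α → ⟪v, x⟫ ≤ 1) : ‖v‖ ≤ α⁻¹ := by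
  rcases eq_or_ne v 0 with rfl | hv
  · simpa using hα.le
  have hv' : 0 < ‖v‖ := norm_pos_iff.mpr hv
  have hx : ‖(α / ‖v‖) • v‖ ≤ α := by
    rw [norm_smul, Real.norm_of_nonneg (by positivity), div_mul_cancel₀ _ hv'.ne']
  have hαv : α * ‖v‖ ≤ 1 := by
    simpa [real_inner_smul_right, real_inner_self_eq_norm_sq, field] using h _ hx
  rwa [← one_div, le_div_iff₀ hα, mul_comm]

theorem inv_le_norm_of_inner_eq_one {u v : E} {β : ℝ} (huv : ⟪u, v⟫ = 1) (hu : ‖u‖ ≤ β) :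
    β⁻¹ ≤ ‖v‖ := by
  have h1 : 1 ≤ ‖u‖ * ‖v‖ := huv ▸ real_inner_le_norm u v
  have hβ : 0 < β := (norm_pos_iff.mpr (by rintro rfl; simp at huv)).trans_le hu
  rw [inv_le_iff_one_le_mul₀ hβ]
  nlinarith [norm_nonneg v]

end

theorem stmt10_general (d : ℕ)
    (N : EuclideanSpace ℝ (Fin d) → ℝ)
    (h_smul : ∀ (a : ℝ) x, N (a • x) = |a| * N x)
    (α β : ℝ) (hα : 0 < α)
    (hball1 : ∀ x : EuclideanSpace ℝ (Fin d), ‖x‖ ≤ α → N x ≤ 1)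
    (hball2 : ∀ x : EuclideanSpace ℝ (Fin d), N x ≤ 1 → ‖x‖ ≤ β)
    (u : EuclideanSpace ℝ (Fin d)) (hu : N u = 1)
    (H : Submodule ℝ (EuclideanSpace ℝ (Fin d))) (hH : Module.finrank ℝ H = d - 1)
    (hsupp : ∀ w ∈ H, 1 ≤ N (u + w))
    (ustar : EuclideanSpace ℝ (Fin d))
    (horth : ∀ w ∈ H, (inner ℝ ustar w : ℝ) = 0)
    (hdual : (inner ℝ u ustar : ℝ) = 1) :
    β⁻¹ ≤ ‖ustar‖ ∧ ‖ustar‖ ≤ α⁻¹ := by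
  have hustar : ustar ≠ 0 := by rintro rfl; simp at hdual
  have hH_eq : H = (ℝ ∙ ustar)ᗮ := Submodule.eq_orthogonal_span_singleton_of_finrank_eq hustar
    horth (by rw [hH, finrank_euclideanSpace_fin])
  have hN : ∀ (a : ℝ) x, 0 < a → N (a • x) = a * N x := fun a x ha ↦ by
    rw [h_smul, abs_of_pos ha]
  have hhalf : ∀ x, N x ≤ 1 → ⟪ustar, x⟫ ≤ 1 := fun x hx ↦
    (le_or_gt ⟪ustar, x⟫ 0).elim (fun h ↦ h.trans zero_le_one) fun h ↦
      (inner_le_of_forall_one_le_add_orthogonal hN (real_inner_comm u ustar ▸ hdual)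
        (hH_eq ▸ hsupp) h).trans hx
  exact ⟨inv_le_norm_of_inner_eq_one hdual (hball2 u hu.le),
    norm_le_inv_of_inner_le_one hα fun x hx ↦ hhalf x (hball1 x hx)⟩

/-- If `B₂(α) ⊆ B_N(1) ⊆ B₂(β)`, `N u = 1`, `u + H` is a supporting hyperplane of
`B_N(1)` at `u` and `u*` is the Euclidean normal to `H` with `⟪u, u*⟫ = 1`, then
`β⁻¹ ≤ ‖u*‖ ≤ α⁻¹`. -/
theorem stmt10 (d : ℕ) (hd : 2 ≤ d)
    (N : EuclideanSpace ℝ (Fin d) → ℝ)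
    (h_tri : ∀ x y, N (x + y) ≤ N x + N y)
    (h_smul : ∀ (a : ℝ) x, N (a • x) = |a| * N x)
    (h_def : ∀ x, N x = 0 → x = 0)
    (α β : ℝ) (hα : 0 < α) (hαβ : α ≤ β)
    (hball1 : ∀ x : EuclideanSpace ℝ (Fin d), ‖x‖ ≤ α → N x ≤ 1)
    (hball2 : ∀ x : EuclideanSpace ℝ (Fin d), N x ≤ 1 → ‖x‖ ≤ β)
    (u : EuclideanSpace ℝ (Fin d)) (hu : N u = 1)
    (H : Submodule ℝ (EuclideanSpace ℝ (Fin d))) (hH : Module.finrank ℝ H = d - 1)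
    (hsupp : ∀ w ∈ H, 1 ≤ N (u + w))
    (ustar : EuclideanSpace ℝ (Fin d))
    (horth : ∀ w ∈ H, (inner ℝ ustar w : ℝ) = 0)
    (hdual : (inner ℝ u ustar : ℝ) = 1) :
    β⁻¹ ≤ ‖ustar‖ ∧ ‖ustar‖ ≤ α⁻¹ :=
  stmt10_general d N h_smul α β hα hball1 hball2 u hu H hH hsupp ustar horth hdual
end
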